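/- Let h : ℝ×ℝ×ℝ → ℝ map [0,1]³ into [0,1] and satisfy: h(0,0,0) = 0; for each coordinate, h is strictly increasing in that coordinate on (0,1] whenever the other two coordinates are fixed in (0,1]; and h is twice continuously differentiable on [0,1]³. Let ε* be the potential threshold of the scalar admissible system f(x,ε) = h(ε·x, ε·x, ε·x), g(x) = x. Then for every ε ∈ [0,1] with ε < ε*, there exists m₀ ∈ ℕ such that for every coupling memory m ≥ m₀, every L ∈ ℕ, and every family (x_t)_{t∈ℤ} with x_t ∈ [0,1] for all t, x_t = 0 for all t ∉ {1,…,L}, and x_t = (1/(m+1))·Σ_{k=0}^{m} h(q_{t+k}, q_{t+k}, q_{t+k}) for all t ∈ {1,…,L}, where q_s = (ε/(m+1))·Σ_{j=0}^{m} x_{s−j}, one has x_t = 0 for all t ∈ ℤ; that is, threshold saturation holds for braided convolutional codes. -/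

import Mathlib

open Set intervalIntegral

/-- `G g x = ∫₀ˣ g(z) dz`. -/
noncomputable def Gfun (g : ℝ → ℝ) (x : ℝ) : ℝ := ∫ z in (0:ℝ)..x, g z

/-- `F f y ε = ∫₀ʸ f(z,ε) dz`. -/
noncomputable def Ffun (f : ℝ → ℝ → ℝ) (y ε : ℝ) : ℝ := ∫ z in (0:ℝ)..y, f z ε

/-- The potential function `U(x;ε) = x·g(x) − G(x) − F(g(x);ε)`. -/
noncomputable def Ufun (f : ℝ → ℝ → ℝ) (g : ℝ → ℝ) (x ε : ℝ) : ℝ :=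
  x * g x - Gfun g x - Ffun f (g x) ε

/-- The minimum unstable fixed point
`u(ε) = sup{ x̃ ∈ [0,1] : f(g(x),ε) < x for all x ∈ (0,x̃) }`. -/
noncomputable def minUnstable (f : ℝ → ℝ → ℝ) (g : ℝ → ℝ) (ε : ℝ) : ℝ :=
  sSup {xt : ℝ | xt ∈ Icc (0:ℝ) 1 ∧ ∀ x ∈ Ioo (0:ℝ) xt, f (g x) ε < x}

/-- The potential threshold
`ε* = sup{ ε ∈ [0,1] : u(ε) > 0 and U(x;ε) > 0 for all x ∈ [u(ε),1] }`. -/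
noncomputable def potentialThreshold (f : ℝ → ℝ → ℝ) (g : ℝ → ℝ) : ℝ :=
  sSup {ε : ℝ | ε ∈ Icc (0:ℝ) 1 ∧ 0 < minUnstable f g ε ∧
    ∀ x ∈ Icc (minUnstable f g ε) 1, 0 < Ufun f g x ε}

/-!
Let `x ≠ 0` be a fixed point of the coupled chain, `y` its running maximum and `M = max x`.
The coupled update is monotone, so `y` is a monotone sub-fixed point which reaches `M` at
`t = L`, and `M ≤ f(M, ε)`. Summing `(y t - y (t-1)) * y t ≥ (y t² - y (t-1)²) / 2` bounds
`M² / 2` by a sum in which, since the forward and backward averages are adjoint, the increments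
of `y` become increments of its backward average `w`. That sum is a Riemann sum of the monotone
function `f(·, ε)` along the partition `w`, whose mesh is at most `M / (m+1)`, so it exceeds
`∫₀^M f(z, ε) dz` by at most `1 / (m+1)`. Now pick `ε < ε'` in the set defining `ε*`. From
`M ≤ f(M, ε) ≤ f(M, ε')` we get `M ≥ u(ε')`, hence `U(M; ε') ≥ δ` for a `δ > 0` given by
compactness, whereas `U(M; ε') ≤ M² / 2 - ∫₀^M f(z, ε) dz ≤ 1 / (m+1) < δ` once `m ≥ 1 / δ`.
-/

open MeasureTheory

noncomputable section

def backwardAvg (m : ℕ) (y : ℤ → ℝ) (s : ℤ) : ℝ :=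
  (1 / (m + 1 : ℝ)) * ∑ j ∈ Finset.range (m + 1), y (s - j)

def forwardAvg (m : ℕ) (v : ℤ → ℝ) (t : ℤ) : ℝ :=
  (1 / (m + 1 : ℝ)) * ∑ k ∈ Finset.range (m + 1), v (t + k)

def coupledStep (m : ℕ) (φ : ℝ → ℝ) (x : ℤ → ℝ) (t : ℤ) : ℝ :=
  forwardAvg m (fun s => φ (backwardAvg m x s)) t

def runningMax (x : ℤ → ℝ) (t : ℤ) : ℝ :=
  (insert 0 ((Finset.Icc 1 t).image x)).max' (Finset.insert_nonempty _ _)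

end

lemma sum_range_sub_sub_one (y : ℤ → ℝ) (s : ℤ) (n : ℕ) :
    ∑ j ∈ Finset.range n, (y (s - j) - y (s - j - 1)) = y s - y (s - n) := by
  have := Finset.sum_range_sub' (fun j : ℕ => y (s - j)) n
  simp only [Nat.cast_add, Nat.cast_one, Nat.cast_zero, sub_zero, ← sub_sub] at this
  exact this

lemma sum_Ioc_sub_sub_one (g : ℤ → ℝ) {a b : ℤ} (hab : a ≤ b) :
    ∑ t ∈ Finset.Ioc a b, (g t - g (t - 1)) = g b - g a := by
  induction b, hab using Int.leInduction with
  | base => simp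
  | succ n hn ih =>
    rw [← Finset.insert_Ioc_right_eq_Ioc_add_one hn, Finset.sum_insert (by simp), ih,
      add_sub_cancel_right]
    ring

section Averages

variable {m : ℕ}

lemma backwardAvg_le_backwardAvg {y y' : ℤ → ℝ} (h : ∀ s, y s ≤ y' s) (s : ℤ) :
    backwardAvg m y s ≤ backwardAvg m y' s := by
  unfold backwardAvg
  gcongr with j
  exact h _

lemma forwardAvg_le_forwardAvg {v v' : ℤ → ℝ} (h : ∀ t, v t ≤ v' t) (t : ℤ) :
    forwardAvg m v t ≤ forwardAvg m v' t := by
  unfold forwardAvg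
  gcongr with k
  exact h _

lemma backwardAvg_const (c : ℝ) (s : ℤ) : backwardAvg m (fun _ => c) s = c := by
  rw [backwardAvg, Finset.sum_const, Finset.card_range, nsmul_eq_mul]
  push_cast
  field_simp

lemma forwardAvg_const (c : ℝ) (t : ℤ) : forwardAvg m (fun _ => c) t = c := by
  rw [forwardAvg, Finset.sum_const, Finset.card_range, nsmul_eq_mul]
  push_cast
  field_simp

lemma backwardAvg_mem_Icc {y : ℤ → ℝ} {a b : ℝ} (h : ∀ s, y s ∈ Icc a b) (s : ℤ) :
    backwardAvg m y s ∈ Icc a b :=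
  ⟨backwardAvg_const (m := m) a s ▸ backwardAvg_le_backwardAvg (fun s => (h s).1) s,
    backwardAvg_const (m := m) b s ▸ backwardAvg_le_backwardAvg (fun s => (h s).2) s⟩

lemma backwardAvg_eq_of_forall {y : ℤ → ℝ} {s : ℤ} {c : ℝ}
    (h : ∀ j : ℕ, j ≤ m → y (s - j) = c) : backwardAvg m y s = c := by
  rw [← backwardAvg_const (m := m) c s]
  unfold backwardAvg
  congr 1
  exact Finset.sum_congr rfl fun j hj => h j (Finset.mem_range_succ_iff.1 hj)

lemma Monotone.backwardAvg {y : ℤ → ℝ} (hy : Monotone y) : Monotone (backwardAvg m y) := by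
  intro s s' hs
  unfold _root_.backwardAvg
  gcongr with j
  exact hy (by omega)

lemma Monotone.forwardAvg {v : ℤ → ℝ} (hv : Monotone v) : Monotone (forwardAvg m v) := by
  intro t t' ht
  unfold _root_.forwardAvg
  gcongr with k
  exact hv (by omega)

lemma backwardAvg_sub_backwardAvg_sub_one (y : ℤ → ℝ) (s : ℤ) :
    backwardAvg m y s - backwardAvg m y (s - 1) = backwardAvg m (fun t => y t - y (t - 1)) s := by
  simp only [backwardAvg, sub_right_comm s 1, ← mul_sub, ← Finset.sum_sub_distrib]

lemma sum_mul_forwardAvg {d : ℤ → ℝ} {a b : ℤ} (hd : ∀ t ∉ Finset.Ioc a b, d t = 0)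
    (v : ℤ → ℝ) :
    ∑ t ∈ Finset.Ioc a b, d t * forwardAvg m v t =
      ∑ s ∈ Finset.Ioc a (b + m), backwardAvg m d s * v s := by
  have shift : ∀ j ∈ Finset.range (m + 1),
      ∑ t ∈ Finset.Ioc a b, d t * v (t + j) = ∑ s ∈ Finset.Ioc a (b + m), d (s - j) * v s := by
    intro j hj
    have hjm : (j : ℤ) ≤ m := by exact_mod_cast Finset.mem_range_succ_iff.mp hj
    calc ∑ t ∈ Finset.Ioc a b, d t * v (t + j)
        = ∑ s ∈ Finset.Ioc (a + j) (b + j), d (s - j) * v s := by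
          rw [← Finset.map_add_right_Ioc, Finset.sum_map]
          simp
      _ = ∑ s ∈ Finset.Ioc a (b + m), d (s - j) * v s := by
          refine Finset.sum_subset (fun s hs => ?_) (fun s _ hs => ?_)
          · simp only [Finset.mem_Ioc] at hs ⊢
            omega
          · rw [hd (s - j) (by simp only [Finset.mem_Ioc] at hs ⊢; omega), zero_mul]
  simp only [forwardAvg, backwardAvg, Finset.mul_sum, Finset.sum_mul]
  rw [Finset.sum_comm, Finset.sum_comm (s := Finset.Ioc a (b + m))]
  refine Finset.sum_congr rfl fun j hj => ?_
  simp only [mul_left_comm (d _), mul_assoc, ← Finset.mul_sum, shift j hj]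

end Averages

lemma MonotoneOn.mul_sub_le_integral {φ : ℝ → ℝ} {a b : ℝ} (hφ : MonotoneOn φ (Icc a b))
    (hab : a ≤ b) : φ a * (b - a) ≤ ∫ z in a..b, φ z := by
  have := integral_mono_on (μ := volume) hab intervalIntegrable_const
    (MonotoneOn.intervalIntegrable (by rwa [uIcc_of_le hab]))
    fun z hz => hφ ⟨le_rfl, hab⟩ hz hz.1
  simpa [mul_comm] using this

lemma sum_sub_mul_le_integral_add {φ : ℝ → ℝ} (hφ : MonotoneOn φ (Icc 0 1)) {w : ℤ → ℝ}
    (hw : Monotone w) (hw01 : ∀ s, w s ∈ Icc (0:ℝ) 1) {c : ℝ} (hc : ∀ s, w s - w (s - 1) ≤ c)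
    {a b : ℤ} (hab : a ≤ b) :
    ∑ s ∈ Finset.Ioc a b, (w s - w (s - 1)) * φ (w s) ≤
      (∫ z in w a..w b, φ z) + c * (φ (w b) - φ (w a)) := by
  have hint : ∀ z ∈ Icc (0:ℝ) 1, IntervalIntegrable φ volume 0 z := fun z hz =>
    (hφ.mono (by rw [uIcc_of_le hz.1]; exact Icc_subset_Icc le_rfl hz.2)).intervalIntegrable
  set Φ : ℝ → ℝ := fun z => ∫ u in (0:ℝ)..z, φ u
  have step : ∀ s, (w s - w (s - 1)) * φ (w s) ≤
      (Φ (w s) - Φ (w (s - 1))) + c * (φ (w s) - φ (w (s - 1))) := by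
    intro s
    have hle : w (s - 1) ≤ w s := hw (by omega)
    have hlow : φ (w (s - 1)) * (w s - w (s - 1)) ≤ Φ (w s) - Φ (w (s - 1)) := by
      rw [integral_interval_sub_left (hint _ (hw01 s)) (hint _ (hw01 _))]
      exact (hφ.mono (Icc_subset_Icc (hw01 _).1 (hw01 s).2)).mul_sub_le_integral hle
    have hjump : 0 ≤ φ (w s) - φ (w (s - 1)) := sub_nonneg.2 (hφ (hw01 _) (hw01 s) hle)
    nlinarith [mul_le_mul_of_nonneg_left (hc s) hjump]
  calc _ ≤ ∑ s ∈ Finset.Ioc a b, ((Φ (w s) - Φ (w (s - 1))) + c * (φ (w s) - φ (w (s - 1)))) :=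
        Finset.sum_le_sum fun s _ => step s
    _ = (Φ (w b) - Φ (w a)) + c * (φ (w b) - φ (w a)) := by
        rw [Finset.sum_add_distrib, ← Finset.mul_sum, sum_Ioc_sub_sub_one (fun s => Φ (w s)) hab,
          sum_Ioc_sub_sub_one (fun s => φ (w s)) hab]
    _ = _ := by rw [integral_interval_sub_left (hint _ (hw01 b)) (hint _ (hw01 a))]

lemma Monotone.le_of_forall_le_imp_eq {y : ℤ → ℝ} (hy : Monotone y) {T : ℤ}
    (hyT : ∀ t, T ≤ t → y t = y T) (s : ℤ) : y s ≤ y T :=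
  (le_total s T).elim (fun h => hy h) fun h => (hyT s h).le

section RunningMax

variable {x : ℤ → ℝ}

lemma runningMax_nonneg (x : ℤ → ℝ) (t : ℤ) : 0 ≤ runningMax x t :=
  Finset.le_max' _ _ (Finset.mem_insert_self _ _)

lemma le_runningMax {s t : ℤ} (h1 : 1 ≤ s) (hst : s ≤ t) : x s ≤ runningMax x t :=
  Finset.le_max' _ _ (Finset.mem_insert_of_mem
    (Finset.mem_image_of_mem x (Finset.mem_Icc.2 ⟨h1, hst⟩)))

lemma monotone_runningMax (x : ℤ → ℝ) : Monotone (runningMax x) := fun _ _ h =>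
  Finset.max'_subset _ (Finset.insert_subset_insert _
    (Finset.image_subset_image (Finset.Icc_subset_Icc le_rfl h)))

lemma runningMax_of_nonpos {t : ℤ} (ht : t ≤ 0) : runningMax x t = 0 := by
  simp [runningMax, Finset.Icc_eq_empty_of_lt (show t < 1 by omega)]

lemma runningMax_eq_zero_or_exists (x : ℤ → ℝ) (t : ℤ) :
    runningMax x t = 0 ∨ ∃ s, 1 ≤ s ∧ s ≤ t ∧ x s = runningMax x t := by
  have := Finset.max'_mem (insert 0 ((Finset.Icc 1 t).image x)) (Finset.insert_nonempty _ _)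
  simp only [Finset.mem_insert, Finset.mem_image, Finset.mem_Icc] at this
  rcases this with h | ⟨s, ⟨hs1, hst⟩, hs⟩
  · exact Or.inl h
  · exact Or.inr ⟨s, hs1, hst, hs⟩

lemma runningMax_le_of_forall_le {t : ℤ} {c : ℝ} (hc : 0 ≤ c)
    (h : ∀ s, 1 ≤ s → s ≤ t → x s ≤ c) : runningMax x t ≤ c := by
  refine Finset.max'_le _ _ _ fun v hv => ?_
  simp only [Finset.mem_insert, Finset.mem_image, Finset.mem_Icc] at hv
  rcases hv with rfl | ⟨s, ⟨hs1, hst⟩, rfl⟩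
  exacts [hc, h s hs1 hst]

lemma runningMax_eq_of_le {L t : ℤ} (hx : ∀ s, L < s → x s = 0) (hLt : L ≤ t) :
    runningMax x t = runningMax x L := by
  refine le_antisymm (runningMax_le_of_forall_le (runningMax_nonneg x L) fun s hs1 _ => ?_)
    (monotone_runningMax x hLt)
  rcases le_or_gt s L with hsL | hsL
  · exact le_runningMax hs1 hsL
  · rw [hx s hsL]
    exact runningMax_nonneg x L

end RunningMax

section CoupledStep

variable {m : ℕ} {φ : ℝ → ℝ}

lemma coupledStep_nonneg (hφ : MapsTo φ (Icc 0 1) (Icc 0 1)) {v : ℤ → ℝ}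
    (hv : ∀ s, v s ∈ Icc (0:ℝ) 1) (t : ℤ) : 0 ≤ coupledStep m φ v t :=
  forwardAvg_const (m := m) 0 t ▸
    forwardAvg_le_forwardAvg (fun s => (hφ (backwardAvg_mem_Icc hv s)).1) t

lemma coupledStep_le_coupledStep (hφ : MonotoneOn φ (Icc 0 1)) {v v' : ℤ → ℝ}
    (hv : ∀ s, v s ∈ Icc (0:ℝ) 1) (hv' : ∀ s, v' s ∈ Icc (0:ℝ) 1) (h : ∀ s, v s ≤ v' s)
    (t : ℤ) : coupledStep m φ v t ≤ coupledStep m φ v' t :=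
  forwardAvg_le_forwardAvg (fun s => hφ (backwardAvg_mem_Icc hv s) (backwardAvg_mem_Icc hv' s)
    (backwardAvg_le_backwardAvg h s)) t

lemma Monotone.coupledStep (hφ : MonotoneOn φ (Icc 0 1)) {v : ℤ → ℝ} (hv : Monotone v)
    (hv01 : ∀ s, v s ∈ Icc (0:ℝ) 1) : Monotone (coupledStep m φ v) :=
  Monotone.forwardAvg fun _ _ hs =>
    hφ (backwardAvg_mem_Icc hv01 _) (backwardAvg_mem_Icc hv01 _) (hv.backwardAvg hs)

lemma coupledStep_le (hφ : MonotoneOn φ (Icc 0 1)) {v : ℤ → ℝ} (hv : ∀ s, v s ∈ Icc (0:ℝ) 1)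
    {c : ℝ} (hc : c ∈ Icc (0:ℝ) 1) (hvc : ∀ s, v s ≤ c) (t : ℤ) :
    coupledStep m φ v t ≤ φ c :=
  forwardAvg_const (m := m) (φ c) t ▸ forwardAvg_le_forwardAvg (fun s =>
    hφ (backwardAvg_mem_Icc hv s) hc
      (backwardAvg_const (m := m) c s ▸ backwardAvg_le_backwardAvg hvc s)) t

lemma runningMax_le_coupledStep (hφ : MonotoneOn φ (Icc 0 1))
    (hφ01 : MapsTo φ (Icc 0 1) (Icc 0 1)) {x : ℤ → ℝ} (hx : ∀ t, x t ∈ Icc (0:ℝ) 1) {L : ℤ}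
    (hsupp : ∀ t ∉ Icc 1 L, x t = 0) (hfix : ∀ t ∈ Icc 1 L, x t ≤ coupledStep m φ x t)
    (t : ℤ) : runningMax x t ≤ coupledStep m φ (runningMax x) t := by
  have hy01 : ∀ s, runningMax x s ∈ Icc (0:ℝ) 1 := fun s =>
    ⟨runningMax_nonneg x s, runningMax_le_of_forall_le zero_le_one fun s _ _ => (hx s).2⟩
  have hxy : ∀ s, x s ≤ runningMax x s := fun s => by
    by_cases hs : 1 ≤ s
    · exact le_runningMax hs le_rfl
    · rw [hsupp s fun h => hs h.1]
      exact runningMax_nonneg x s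
  rcases runningMax_eq_zero_or_exists x t with h0 | ⟨s, hs1, hst, hxs⟩
  · rw [h0]
    exact coupledStep_nonneg hφ01 hy01 t
  rw [← hxs]
  by_cases hsL : s ∈ Icc 1 L
  · calc x s ≤ coupledStep m φ x s := hfix s hsL
      _ ≤ coupledStep m φ (runningMax x) s := coupledStep_le_coupledStep hφ hx hy01 hxy s
      _ ≤ coupledStep m φ (runningMax x) t := (monotone_runningMax x).coupledStep hφ hy01 hst
  · rw [hsupp s hsL]
    exact coupledStep_nonneg hφ01 hy01 t

end CoupledStep

lemma potential_le_of_le_coupledStep {m : ℕ} {φ : ℝ → ℝ} (hφ : MonotoneOn φ (Icc 0 1))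
    {y : ℤ → ℝ} (hy : Monotone y) (hy01 : ∀ t, y t ∈ Icc (0:ℝ) 1) (hy0 : ∀ t ≤ 0, y t = 0)
    {T : ℤ} (hT : 0 ≤ T) (hyT : ∀ t, T ≤ t → y t = y T)
    (hsub : ∀ t, y t ≤ coupledStep m φ y t) :
    y T ^ 2 / 2 - ∫ z in (0:ℝ)..y T, φ z ≤ y T / (m + 1) * (φ (y T) - φ 0) := by
  set w := backwardAvg m y
  have hw0 : w 0 = 0 := backwardAvg_eq_of_forall fun j _ => hy0 _ (by omega)
  have hwT : w (T + m) = y T := backwardAvg_eq_of_forall fun j hj => hyT _ (by omega)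
  have hstep : ∀ s, w s - w (s - 1) ≤ y T / (m + 1) := by
    intro s
    rw [backwardAvg_sub_backwardAvg_sub_one, backwardAvg, sum_range_sub_sub_one,
      one_div_mul_eq_div]
    gcongr
    linarith [hy.le_of_forall_le_imp_eq hyT s, (hy01 (s - (m + 1 : ℕ))).1]
  have hΔ : ∀ t ∉ Finset.Ioc 0 T, y t - y (t - 1) = 0 := by
    intro t ht
    rw [Finset.mem_Ioc, not_and_or, not_lt, not_le] at ht
    rcases ht with ht | ht
    · rw [hy0 t ht, hy0 (t - 1) (by omega), sub_self]
    · rw [hyT t ht.le, hyT (t - 1) (by omega), sub_self]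
  suffices y T ^ 2 / 2 ≤ (∫ z in (0:ℝ)..y T, φ z) + y T / (m + 1) * (φ (y T) - φ 0) by
    linarith
  calc y T ^ 2 / 2 = ∑ t ∈ Finset.Ioc 0 T, (y t ^ 2 / 2 - y (t - 1) ^ 2 / 2) := by
        rw [sum_Ioc_sub_sub_one (fun t => y t ^ 2 / 2) hT, hy0 0 le_rfl]
        ring
    _ ≤ ∑ t ∈ Finset.Ioc 0 T, (y t - y (t - 1)) * coupledStep m φ y t :=
        Finset.sum_le_sum fun t _ => by
          have hΔy : 0 ≤ y t - y (t - 1) := sub_nonneg.2 (hy (by omega))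
          nlinarith [mul_le_mul_of_nonneg_left (hsub t) hΔy, sq_nonneg (y t - y (t - 1))]
    _ = ∑ s ∈ Finset.Ioc 0 (T + m), (w s - w (s - 1)) * φ (w s) := by
        simp only [coupledStep, sum_mul_forwardAvg hΔ, w, backwardAvg_sub_backwardAvg_sub_one]
    _ ≤ (∫ z in w 0..w (T + m), φ z) + y T / (m + 1) * (φ (w (T + m)) - φ (w 0)) :=
        sum_sub_mul_le_integral_add hφ hy.backwardAvg (backwardAvg_mem_Icc hy01) hstep (by omega)
    _ = _ := by rw [hw0, hwT]

theorem exists_potential_le_of_le_coupledStep {m : ℕ} {φ : ℝ → ℝ}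
    (hφ : MonotoneOn φ (Icc 0 1)) (hφ01 : MapsTo φ (Icc 0 1) (Icc 0 1)) {L : ℤ} {x : ℤ → ℝ}
    (hx : ∀ t, x t ∈ Icc (0:ℝ) 1) (hsupp : ∀ t ∉ Icc 1 L, x t = 0)
    (hfix : ∀ t ∈ Icc 1 L, x t ≤ coupledStep m φ x t) {t₀ : ℤ} (ht₀ : x t₀ ≠ 0) :
    ∃ M ∈ Ioc (0:ℝ) 1, M ≤ φ M ∧ M ^ 2 / 2 - ∫ z in (0:ℝ)..M, φ z ≤ 1 / (m + 1) := by
  set y := runningMax x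
  have hy01 : ∀ t, y t ∈ Icc (0:ℝ) 1 := fun t =>
    ⟨runningMax_nonneg x t, runningMax_le_of_forall_le zero_le_one fun s _ _ => (hx s).2⟩
  have ht₀L : t₀ ∈ Icc 1 L := by
    by_contra h
    exact ht₀ (hsupp t₀ h)
  have hyL : ∀ t, L ≤ t → y t = y L := fun t =>
    runningMax_eq_of_le fun s hs => hsupp s fun h => (h.2.trans_lt hs).false
  have hsub := runningMax_le_coupledStep hφ hφ01 hx hsupp hfix
  have hM : 0 < y L := ((hx t₀).1.lt_of_ne (Ne.symm ht₀)).trans_le (le_runningMax ht₀L.1 ht₀L.2)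
  have h0 : (0:ℝ) ∈ Icc 0 1 := left_mem_Icc.2 zero_le_one
  have hφ0 : 0 ≤ φ (y L) - φ 0 := sub_nonneg.2 (hφ h0 (hy01 L) hM.le)
  have hφ1 : φ (y L) - φ 0 ≤ 1 := by linarith [(hφ01 (hy01 L)).2, (hφ01 h0).1]
  refine ⟨y L, ⟨hM, (hy01 L).2⟩, (hsub L).trans (coupledStep_le hφ hy01 (hy01 L)
    ((monotone_runningMax x).le_of_forall_le_imp_eq hyL) L), ?_⟩
  calc _ ≤ y L / (m + 1) * (φ (y L) - φ 0) :=
        potential_le_of_le_coupledStep hφ (monotone_runningMax x) hy01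
          (fun t => runningMax_of_nonpos) (by linarith [ht₀L.1, ht₀L.2]) hyL hsub
    _ ≤ 1 / (m + 1) * 1 :=
        mul_le_mul (div_le_div_of_nonneg_right (hy01 L).2 (by positivity)) hφ1 hφ0
          (by positivity)
    _ = 1 / (m + 1) := mul_one _

section PotentialThreshold

variable {f : ℝ → ℝ → ℝ}

lemma minUnstable_le {g : ℝ → ℝ} {ε M : ℝ} (hM : 0 < M) (hfM : M ≤ f (g M) ε) :
    minUnstable f g ε ≤ M := by
  by_contra! h
  obtain ⟨xt, ⟨_, hxt⟩, hMxt⟩ := exists_lt_of_lt_csSup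
    (by exact ⟨0, ⟨le_rfl, zero_le_one⟩, fun x hx => (hx.1.trans hx.2).false.elim⟩) h
  exact (hxt M ⟨hM, hMxt⟩).not_ge hfM

lemma exists_gt_of_lt_potentialThreshold {g : ℝ → ℝ} {ε : ℝ} (hε : 0 ≤ ε)
    (h : ε < potentialThreshold f g) :
    ∃ ε' ∈ Icc (0:ℝ) 1, ε < ε' ∧ 0 < minUnstable f g ε' ∧
      ∀ x ∈ Icc (minUnstable f g ε') 1, 0 < Ufun f g x ε' := by
  rcases Set.eq_empty_or_nonempty {ε : ℝ | ε ∈ Icc (0:ℝ) 1 ∧ 0 < minUnstable f g ε ∧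
    ∀ x ∈ Icc (minUnstable f g ε) 1, 0 < Ufun f g x ε} with hS | hS
  · rw [potentialThreshold, hS, Real.sSup_empty] at h
    exact absurd hε h.not_ge
  obtain ⟨ε', ⟨hε', hu, hU⟩, hεε'⟩ := exists_lt_of_lt_csSup hS h
  exact ⟨ε', hε', hεε', hu, hU⟩

lemma Ufun_id (x ε : ℝ) : Ufun f (fun x => x) x ε = x ^ 2 / 2 - ∫ z in (0:ℝ)..x, f z ε := by
  rw [Ufun, Gfun, Ffun, integral_id]
  ring

lemma continuousOn_Ufun_id {ε : ℝ}
    (hf : IntervalIntegrable (fun z => f z ε) volume 0 1) :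
    ContinuousOn (fun x => Ufun f (fun x => x) x ε) (Icc 0 1) := by
  simp only [Ufun_id]
  have := continuousOn_primitive_interval' hf left_mem_uIcc
  rw [uIcc_of_le zero_le_one] at this
  exact (continuous_pow 2 |>.div_const 2).continuousOn.sub this

theorem eq_zero_of_le_coupledStep_of_lt_potentialThreshold
    (hf : ∀ ε ∈ Icc (0:ℝ) 1, MonotoneOn (fun x => f x ε) (Icc 0 1))
    (hf01 : ∀ ε ∈ Icc (0:ℝ) 1, MapsTo (fun x => f x ε) (Icc 0 1) (Icc 0 1))
    (hfε : ∀ x ∈ Icc (0:ℝ) 1, MonotoneOn (f x) (Icc 0 1))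
    {ε : ℝ} (hε : ε ∈ Icc (0:ℝ) 1) (hlt : ε < potentialThreshold f fun x => x) :
    ∃ m₀ : ℕ, ∀ m ≥ m₀, ∀ L : ℤ, ∀ x : ℤ → ℝ, (∀ t, x t ∈ Icc (0:ℝ) 1) →
      (∀ t ∉ Icc 1 L, x t = 0) → (∀ t ∈ Icc 1 L, x t ≤ coupledStep m (fun z => f z ε) x t) →
      ∀ t, x t = 0 := by
  have hint : ∀ e ∈ Icc (0:ℝ) 1, ∀ z ∈ Icc (0:ℝ) 1,
      IntervalIntegrable (fun x => f x e) volume 0 z := fun e he z hz =>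
    MonotoneOn.intervalIntegrable ((hf e he).mono
      (by rw [uIcc_of_le hz.1]; exact Icc_subset_Icc le_rfl hz.2))
  obtain ⟨ε', hε', hεε', hu, hU⟩ := exists_gt_of_lt_potentialThreshold hε.1 hlt
  obtain ⟨δ, hδ, hδU⟩ := isCompact_Icc.exists_forall_le'
    ((continuousOn_Ufun_id (hint ε' hε' 1 ⟨zero_le_one, le_rfl⟩)).mono
      (Icc_subset_Icc hu.le le_rfl)) hU
  refine ⟨⌈1 / δ⌉₊, fun m hm L x hx hsupp hfix t => by_contra fun ht => ?_⟩
  obtain ⟨M, hM, hMf, hpot⟩ := exists_potential_le_of_le_coupledStep (hf ε hε) (hf01 ε hε)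
    hx hsupp hfix ht
  have hM01 : M ∈ Icc (0:ℝ) 1 := ⟨hM.1.le, hM.2⟩
  have hMu : minUnstable f (fun x => x) ε' ≤ M :=
    minUnstable_le hM.1 (hMf.trans (hfε M hM01 hε hε' hεε'.le))
  have hUM : Ufun f (fun x => x) M ε' ≤ M ^ 2 / 2 - ∫ z in (0:ℝ)..M, f z ε := by
    rw [Ufun_id]
    gcongr
    exact integral_mono_on hM.1.le (hint ε hε M hM01) (hint ε' hε' M hM01) fun z hz =>
      hfε z ⟨hz.1, hz.2.trans hM.2⟩ hε hε' hεε'.le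
  have hmδ : 1 / (m + 1 : ℝ) < δ := by
    rw [one_div_lt (by positivity) hδ]
    exact (Nat.le_ceil _).trans_lt (by exact_mod_cast Nat.lt_succ_of_le hm)
  linarith [hδU M ⟨hMu, hM.2⟩]

end PotentialThreshold

lemma monotoneOn_diag {h : ℝ → ℝ → ℝ → ℝ}
    (h_maps : ∀ a ∈ Icc (0:ℝ) 1, ∀ b ∈ Icc (0:ℝ) 1, ∀ c ∈ Icc (0:ℝ) 1,
      h a b c ∈ Icc (0:ℝ) 1)
    (h_zero : h 0 0 0 = 0)
    (h_mono1 : ∀ b ∈ Ioc (0:ℝ) 1, ∀ c ∈ Ioc (0:ℝ) 1,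
      StrictMonoOn (fun a => h a b c) (Ioc 0 1))
    (h_mono2 : ∀ a ∈ Ioc (0:ℝ) 1, ∀ c ∈ Ioc (0:ℝ) 1,
      StrictMonoOn (fun b => h a b c) (Ioc 0 1))
    (h_mono3 : ∀ a ∈ Ioc (0:ℝ) 1, ∀ b ∈ Ioc (0:ℝ) 1,
      StrictMonoOn (fun c => h a b c) (Ioc 0 1)) :
    MonotoneOn (fun t => h t t t) (Icc 0 1) := by
  intro a ha b hb hab
  rcases ha.1.eq_or_lt with rfl | ha0
  · change h 0 0 0 ≤ h b b b
    rw [h_zero]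
    exact (h_maps b hb b hb b hb).1
  have ha' : a ∈ Ioc (0:ℝ) 1 := ⟨ha0, ha.2⟩
  have hb' : b ∈ Ioc (0:ℝ) 1 := ⟨ha0.trans_le hab, hb.2⟩
  calc h a a a ≤ h b a a := (h_mono1 a ha' a ha').monotoneOn ha' hb' hab
    _ ≤ h b b a := (h_mono2 b hb' a ha').monotoneOn ha' hb' hab
    _ ≤ h b b b := (h_mono3 b hb' b hb').monotoneOn ha' hb' hab

theorem threshold_saturation_BCC_general
    (h : ℝ → ℝ → ℝ → ℝ)
    (h_maps : ∀ a ∈ Icc (0:ℝ) 1, ∀ b ∈ Icc (0:ℝ) 1, ∀ c ∈ Icc (0:ℝ) 1,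
      h a b c ∈ Icc (0:ℝ) 1)
    (h_zero : h 0 0 0 = 0)
    (h_mono1 : ∀ b ∈ Ioc (0:ℝ) 1, ∀ c ∈ Ioc (0:ℝ) 1,
      StrictMonoOn (fun a => h a b c) (Ioc (0:ℝ) 1))
    (h_mono2 : ∀ a ∈ Ioc (0:ℝ) 1, ∀ c ∈ Ioc (0:ℝ) 1,
      StrictMonoOn (fun b => h a b c) (Ioc (0:ℝ) 1))
    (h_mono3 : ∀ a ∈ Ioc (0:ℝ) 1, ∀ b ∈ Ioc (0:ℝ) 1,
      StrictMonoOn (fun c => h a b c) (Ioc (0:ℝ) 1)) :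
    ∀ ε ∈ Icc (0:ℝ) 1,
      ε < potentialThreshold (fun x ε' => h (ε' * x) (ε' * x) (ε' * x))
            (fun x => x) →
      ∃ m₀ : ℕ, ∀ m : ℕ, m₀ ≤ m → ∀ L : ℕ, ∀ x : ℤ → ℝ,
        (∀ t : ℤ, x t ∈ Icc (0:ℝ) 1) →
        (∀ t : ℤ, t ∉ Icc (1:ℤ) (L:ℤ) → x t = 0) →
        (∀ q : ℤ → ℝ,
          (∀ s : ℤ, q s = (ε / (m + 1 : ℝ)) * ∑ j ∈ Finset.range (m + 1),
            x (s - (j : ℤ))) →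
          ∀ t ∈ Icc (1:ℤ) (L:ℤ),
            x t = (1 / (m + 1 : ℝ)) * ∑ k ∈ Finset.range (m + 1),
              h (q (t + (k : ℤ))) (q (t + (k : ℤ))) (q (t + (k : ℤ)))) →
        ∀ t : ℤ, x t = 0 := by
  intro ε hε hlt
  have hdiag := monotoneOn_diag h_maps h_zero h_mono1 h_mono2 h_mono3
  obtain ⟨m₀, hm₀⟩ := eq_zero_of_le_coupledStep_of_lt_potentialThreshold
    (f := fun x ε' => h (ε' * x) (ε' * x) (ε' * x))
    (fun e he => hdiag.comp (fun _ _ _ _ hab => mul_le_mul_of_nonneg_left hab he.1)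
      fun _ hz => unitInterval.mul_mem he hz)
    (fun e he z hz => have hez := unitInterval.mul_mem he hz; h_maps _ hez _ hez _ hez)
    (fun z hz => hdiag.comp (fun _ _ _ _ hab => mul_le_mul_of_nonneg_right hab hz.1)
      fun _ he => unitInterval.mul_mem he hz)
    hε hlt
  refine ⟨m₀, fun m hm L x hx hsupp hfix => hm₀ m hm L x hx hsupp fun t ht =>
    (hfix _ (fun _ => rfl) t ht).le.trans_eq ?_⟩
  simp only [coupledStep, forwardAvg, backwardAvg, ← mul_assoc, mul_one_div]

/-- threshold saturation for braided convolutional codes.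
Here `h` is the average BCJR transfer function over the three edge types,
the underlying scalar admissible system is `f(x,ε) = h(ε·x,ε·x,ε·x)`,
`g(x) = x`, `ε*` is its potential threshold, and
`q_s = (ε/(m+1))·Σ_{j=0}^{m} x_{s−j}`. -/
theorem threshold_saturation_BCC
    (h : ℝ → ℝ → ℝ → ℝ)
    (h_maps : ∀ a ∈ Icc (0:ℝ) 1, ∀ b ∈ Icc (0:ℝ) 1, ∀ c ∈ Icc (0:ℝ) 1,
      h a b c ∈ Icc (0:ℝ) 1)
    (h_zero : h 0 0 0 = 0)
    (h_mono1 : ∀ b ∈ Ioc (0:ℝ) 1, ∀ c ∈ Ioc (0:ℝ) 1,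
      StrictMonoOn (fun a => h a b c) (Ioc (0:ℝ) 1))
    (h_mono2 : ∀ a ∈ Ioc (0:ℝ) 1, ∀ c ∈ Ioc (0:ℝ) 1,
      StrictMonoOn (fun b => h a b c) (Ioc (0:ℝ) 1))
    (h_mono3 : ∀ a ∈ Ioc (0:ℝ) 1, ∀ b ∈ Ioc (0:ℝ) 1,
      StrictMonoOn (fun c => h a b c) (Ioc (0:ℝ) 1))
    (h_smooth : ContDiffOn ℝ 2 (fun p : ℝ × ℝ × ℝ => h p.1 p.2.1 p.2.2)
      (Icc (0:ℝ) 1 ×ˢ Icc (0:ℝ) 1 ×ˢ Icc (0:ℝ) 1)) :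
    ∀ ε ∈ Icc (0:ℝ) 1,
      ε < potentialThreshold (fun x ε' => h (ε' * x) (ε' * x) (ε' * x))
            (fun x => x) →
      ∃ m₀ : ℕ, ∀ m : ℕ, m₀ ≤ m → ∀ L : ℕ, ∀ x : ℤ → ℝ,
        (∀ t : ℤ, x t ∈ Icc (0:ℝ) 1) →
        (∀ t : ℤ, t ∉ Icc (1:ℤ) (L:ℤ) → x t = 0) →
        (∀ q : ℤ → ℝ,
          (∀ s : ℤ, q s = (ε / (m + 1 : ℝ)) * ∑ j ∈ Finset.range (m + 1),
            x (s - (j : ℤ))) →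
          ∀ t ∈ Icc (1:ℤ) (L:ℤ),
            x t = (1 / (m + 1 : ℝ)) * ∑ k ∈ Finset.range (m + 1),
              h (q (t + (k : ℤ))) (q (t + (k : ℤ))) (q (t + (k : ℤ)))) →
        ∀ t : ℤ, x t = 0 :=
  threshold_saturation_BCC_general h h_maps h_zero h_mono1 h_mono2 h_mono3
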